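/- arXiv:1902.00325 — 5 statements merged into one kernel-verified Lean document; each statement's English description precedes it below -/
import Mathlib

section
/- Quantum equality characterizes product states: let H₁, H₂ be finite-dimensional Hilbert spaces of the same dimension, identified via a fixed unitary u : H₂ → H₁, and let SWAP be the unitary on H₁ ⊗ H₂ determined by SWAP(x ⊗ y) = u(y) ⊗ u⁻¹(x). Then for nonzero vectors ψ₁ ∈ H₁ and ψ₂ ∈ H₂, SWAP(ψ₁ ⊗ ψ₂) = ψ₁ ⊗ ψ₂ if and only if there exists a scalar c ∈ ℂ with ψ₁ = c · u(ψ₂). -/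
open TensorProduct

theorem stmt4 {H₁ H₂ : Type*}
    [NormedAddCommGroup H₁] [InnerProductSpace ℂ H₁] [FiniteDimensional ℂ H₁]
    [NormedAddCommGroup H₂] [InnerProductSpace ℂ H₂] [FiniteDimensional ℂ H₂]
    (u : H₂ ≃ₗᵢ[ℂ] H₁) (ψ₁ : H₁) (ψ₂ : H₂) (h₁ : ψ₁ ≠ 0) (h₂ : ψ₂ ≠ 0) :
    (TensorProduct.map u.toLinearEquiv.toLinearMap u.symm.toLinearEquiv.toLinearMap)
        ((TensorProduct.comm ℂ H₁ H₂) (ψ₁ ⊗ₜ[ℂ] ψ₂)) = ψ₁ ⊗ₜ[ℂ] ψ₂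
      ↔ ∃ c : ℂ, ψ₁ = c • u ψ₂ := by
  simp only [TensorProduct.comm_tmul, TensorProduct.map_tmul,
    LinearEquiv.coe_coe, LinearIsometryEquiv.coe_toLinearEquiv]
  constructor
  · intro h
    -- apply (id ⊗ ⟪ψ₂, ·⟫) to both sides
    set f : H₂ →ₗ[ℂ] ℂ := (innerSL ℂ ψ₂).toLinearMap with hf
    have h2 : f ψ₂ ≠ 0 := by
      simp only [hf, ContinuousLinearMap.coe_coe, innerSL_apply_apply]
      rw [inner_self_eq_norm_sq_to_K]
      simpa using h₂
    have := congrArg (fun z => (TensorProduct.rid ℂ H₁) ((TensorProduct.map LinearMap.id f) z)) h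
    simp only [TensorProduct.map_tmul, LinearMap.id_apply, TensorProduct.rid_tmul] at this
    refine ⟨f (u.symm ψ₁) / f ψ₂, ?_⟩
    rw [div_eq_mul_inv, mul_comm, mul_smul, this, inv_smul_smul₀ h2]
  · rintro ⟨c, rfl⟩
    simp [TensorProduct.tmul_smul, TensorProduct.smul_tmul]
end

section
/- Disentangling property of quantum equality with an ancilla: let V, H, H' be finite-dimensional Hilbert spaces with dim H = dim H', identified via a unitary u : H' → H, and let SWAP be the unitary on (V ⊗ H) ⊗ H' swapping the H and H' factors via u (acting as identity on V). If ψ ∈ V ⊗ H and φ ∈ H' are nonzero vectors with SWAP(ψ ⊗ φ) = ψ ⊗ φ, then ψ is a simple tensor: ψ = v ⊗ h for some v ∈ V and h ∈ H (indeed h proportional to u(φ)). -/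
open TensorProduct

theorem stmt5 {V H H' : Type*}
    [NormedAddCommGroup V] [InnerProductSpace ℂ V] [FiniteDimensional ℂ V]
    [NormedAddCommGroup H] [InnerProductSpace ℂ H] [FiniteDimensional ℂ H]
    [NormedAddCommGroup H'] [InnerProductSpace ℂ H'] [FiniteDimensional ℂ H']
    (u : H' ≃ₗᵢ[ℂ] H)
    (SWAP : TensorProduct ℂ (TensorProduct ℂ V H) H' →ₗ[ℂ]
            TensorProduct ℂ (TensorProduct ℂ V H) H')
    (hSWAP : ∀ (v : V) (x : H) (y : H'),
      SWAP ((v ⊗ₜ[ℂ] x) ⊗ₜ[ℂ] y) = (v ⊗ₜ[ℂ] u y) ⊗ₜ[ℂ] u.symm x)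
    (ψ : TensorProduct ℂ V H) (φ : H') (hψ : ψ ≠ 0) (hφ : φ ≠ 0)
    (hfix : SWAP (ψ ⊗ₜ[ℂ] φ) = ψ ⊗ₜ[ℂ] φ) :
    ∃ (v : V) (h : H), ψ = v ⊗ₜ[ℂ] h := by
  obtain ⟨f, hf⟩ : ∃ f : H' →ₗ[ℂ] ℂ, f φ = 1 := by
    refine ⟨((‖φ‖ : ℂ) ^ 2)⁻¹ • (innerSL ℂ φ).toLinearMap, ?_⟩
    have h2 : (inner ℂ φ φ : ℂ) = (‖φ‖ : ℂ) ^ 2 := inner_self_eq_norm_sq_to_K φ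
    have hn : (‖φ‖ : ℂ) ^ 2 ≠ 0 := by
      simp [pow_ne_zero_iff, norm_eq_zero, hφ]
    simp only [LinearMap.smul_apply, ContinuousLinearMap.coe_coe, innerSL_apply_apply, h2,
      smul_eq_mul]
    exact inv_mul_cancel₀ hn
  set T : TensorProduct ℂ (TensorProduct ℂ V H) H' →ₗ[ℂ] TensorProduct ℂ V H :=
    (TensorProduct.rid ℂ (TensorProduct ℂ V H)).toLinearMap.comp
      (LinearMap.lTensor (TensorProduct ℂ V H) f) with hT
  have hTapp : ∀ (a : TensorProduct ℂ V H) (y : H'), T (a ⊗ₜ[ℂ] y) = f y • a := by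
    intro a y
    simp [hT, TensorProduct.rid_tmul]
  have key : ∀ ξ : TensorProduct ℂ V H, ∃ w : V, T (SWAP (ξ ⊗ₜ[ℂ] φ)) = w ⊗ₜ[ℂ] u φ := by
    intro ξ
    induction ξ using TensorProduct.induction_on with
    | zero => exact ⟨0, by simp⟩
    | tmul v x =>
        refine ⟨f (u.symm x) • v, ?_⟩
        rw [hSWAP, hTapp, TensorProduct.smul_tmul', ]
    | add a b ha hb =>
        obtain ⟨wa, hwa⟩ := ha
        obtain ⟨wb, hwb⟩ := hb
        refine ⟨wa + wb, ?_⟩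
        rw [TensorProduct.add_tmul, map_add, map_add, hwa, hwb,
          TensorProduct.add_tmul]
  obtain ⟨w, hw⟩ := key ψ
  rw [hfix, hTapp, hf, one_smul] at hw
  exact ⟨w, u φ, hw⟩
end

section
/- Characterization of the distribution predicate: let T be a finite type, D a probability distribution on T, and ψ_D := ∑_i √(D i) |i⟩ ⊗ |i⟩ ∈ ℓ²(T) ⊗ ℓ²(T). Let ρ be a positive semidefinite operator on K ⊗ ℓ²(T) for a finite-dimensional Hilbert space K. Then the following are equivalent: (a) there exists a positive semidefinite ρ° on K ⊗ ℓ²(T) ⊗ ℓ²(T) with range contained in K ⊗ span{ψ_D} and whose partial trace over the third factor equals ρ; (b) ρ = ρ' ⊗ ρ_D for some positive semidefinite ρ' on K, where ρ_D := ∑_i D(i)|i⟩⟨i|. -/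
open Matrix ComplexOrder Kronecker

theorem stmt12 {κ T : Type*} [Fintype κ] [Fintype T] [DecidableEq T]
    (D : T → NNReal) (hD : ∑ i, D i = 1)
    (ψD : T × T → ℂ)
    (hψD : ψD = fun t => if t.1 = t.2 then ((Real.sqrt (D t.1) : ℝ) : ℂ) else 0)
    (ρ : Matrix (κ × T) (κ × T) ℂ) (hρ : ρ.PosSemidef) :
    (∃ ρc : Matrix (κ × T × T) (κ × T × T) ℂ, ρc.PosSemidef ∧
        (∀ x ∈ LinearMap.range ρc.mulVecLin, ∃ g : κ → ℂ, x = fun p => g p.1 * ψD p.2) ∧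
        (Matrix.of fun p q : κ × T => ∑ b : T, ρc (p.1, (p.2, b)) (q.1, (q.2, b))) = ρ)
      ↔ (∃ ρ' : Matrix κ κ ℂ, ρ'.PosSemidef ∧
          ρ = ρ' ⊗ₖ Matrix.diagonal (fun i => ((D i : ℝ) : ℂ))) := by
  classical
  have hψreal : ∀ t, star (ψD t) = ψD t := by
    intro t; rw [hψD]; dsimp only; split <;> simp
  have hpsum : ∀ s t : T, (∑ b : T, ψD (s, b) * ψD (t, b)) =
      if s = t then ((D s : ℝ) : ℂ) else 0 := by
    intro s t
    rw [hψD]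
    dsimp only
    rw [Finset.sum_eq_single s]
    · by_cases h : s = t
      · subst h
        simp [← Complex.ofReal_mul, Real.mul_self_sqrt (D s).coe_nonneg]
      · simp [h, Ne.symm h]
    · intro b _ hb
      simp [Ne.symm hb]
    · simp
  constructor
  · rintro ⟨ρc, hpsd, hrange, htr⟩
    obtain ⟨i0, -, hi0⟩ := Finset.exists_ne_zero_of_sum_ne_zero
      (s := Finset.univ) (f := D) (by rw [hD]; exact one_ne_zero)
    set s0 : T × T := (i0, i0) with hs0
    set c : ℝ := Real.sqrt (D i0) with hcdef
    have hc : ψD s0 = (c : ℂ) := by rw [hψD]; simp [hs0, hcdef]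
    have hcpos : 0 < c := Real.sqrt_pos.2 (NNReal.coe_pos.mpr (pos_iff_ne_zero.mpr hi0))
    have hcne : ((c : ℂ)) ≠ 0 := by exact_mod_cast hcpos.ne'
    have hc2ne : ((c : ℂ))^2 ≠ 0 := pow_ne_zero _ hcne
    -- eq1
    have hcol : ∀ (b : κ) (t : T × T), ∃ g : κ → ℂ,
        ∀ p : κ × T × T, ρc p (b, t) = g p.1 * ψD p.2 := by
      intro b t
      obtain ⟨g, hg⟩ := hrange (ρc.mulVecLin (Pi.single (b, t) 1))
        ⟨Pi.single (b, t) 1, rfl⟩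
      refine ⟨g, fun p => ?_⟩
      have := congrFun hg p
      simpa [Matrix.mulVecLin_apply, Matrix.mulVec_single] using this
    have eq1 : ∀ (a : κ) (s : T × T) (b : κ) (t : T × T),
        ρc (a, s) (b, t) * (c : ℂ) = ρc (a, s0) (b, t) * ψD s := by
      intro a s b t
      obtain ⟨g, hg⟩ := hcol b t
      rw [hg (a, s), hg (a, s0), hc]
      ring
    have herm : ∀ p q, star (ρc q p) = ρc p q := by
      intro p q
      exact congrFun (congrFun hpsd.1 p) q
    have eq2 : ∀ (a : κ) (b : κ) (t : T × T),
        ρc (a, s0) (b, t) * (c : ℂ) = ρc (a, s0) (b, s0) * ψD t := by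
      intro a b t
      have h1 := eq1 b t a s0
      have h2 := congrArg star h1
      simp only [star_mul', herm, hψreal, Complex.star_def, Complex.conj_ofReal] at h2
      linear_combination h2
    have eq3 : ∀ (a : κ) (s : T × T) (b : κ) (t : T × T),
        ρc (a, s) (b, t) * (c : ℂ)^2 = ρc (a, s0) (b, s0) * ψD s * ψD t := by
      intro a s b t
      have := congrArg (· * ψD s) (eq2 a b t)
      calc ρc (a, s) (b, t) * (c : ℂ)^2
          = (ρc (a, s) (b, t) * (c : ℂ)) * (c : ℂ) := by ring
        _ = (ρc (a, s0) (b, t) * (c:ℂ)) * ψD s := by rw [eq1]; ring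
        _ = (ρc (a, s0) (b, s0) * ψD t) * ψD s := by rw [eq2]
        _ = ρc (a, s0) (b, s0) * ψD s * ψD t := by ring
    set ρ' : Matrix κ κ ℂ := Matrix.of fun a b => ρc (a, s0) (b, s0) / ((c:ℂ)^2) with hρ'
    obtain ⟨B, hB⟩ : ∃ B : Matrix (κ × T × T) (κ × T × T) ℂ, ρc = Bᴴ * B := by
      open scoped MatrixOrder in
      obtain ⟨B, hB⟩ := CStarAlgebra.nonneg_iff_eq_star_mul_self.mp hpsd.nonneg
      exact ⟨B, hB⟩
    have hρ'psd : ρ'.PosSemidef := by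
      have hfac : ρ' = (Matrix.of fun (k : κ × T × T) (a : κ) => B k (a, s0) / (c:ℂ))ᴴ *
          (Matrix.of fun (k : κ × T × T) (a : κ) => B k (a, s0) / (c:ℂ)) := by
        ext a b
        have hentry : ρc (a, s0) (b, s0) = ∑ k, star (B k (a, s0)) * B k (b, s0) := by
          rw [hB]; simp [Matrix.mul_apply, Matrix.conjTranspose_apply]
        show ρc (a, s0) (b, s0) / ((c:ℂ)^2) = _
        rw [Matrix.mul_apply, hentry, Finset.sum_div]
        refine Finset.sum_congr rfl fun k _ => ?_
        simp only [Matrix.conjTranspose_apply, Matrix.of_apply]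
        rw [star_div₀, Complex.star_def, Complex.conj_ofReal]
        field_simp
      rw [hfac]
      exact Matrix.posSemidef_conjTranspose_mul_self _
    refine ⟨ρ', hρ'psd, ?_⟩
    ext ⟨a, s1⟩ ⟨b, t1⟩
    refine mul_right_cancel₀ hc2ne ?_
    have hLHS : ρ (a, s1) (b, t1) = ∑ b' : T, ρc (a, (s1, b')) (b, (t1, b')) := by
      rw [← htr]; rfl
    rw [hLHS, Finset.sum_mul]
    calc (∑ b' : T, ρc (a, (s1, b')) (b, (t1, b')) * (c:ℂ)^2)
        = ∑ b' : T, ρc (a, s0) (b, s0) * (ψD (s1, b') * ψD (t1, b')) := by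
          refine Finset.sum_congr rfl fun b' _ => ?_
          rw [eq3]; ring
      _ = ρc (a, s0) (b, s0) * (if s1 = t1 then ((D s1 : ℝ) : ℂ) else 0) := by
          rw [← Finset.mul_sum, hpsum]
      _ = (ρ' ⊗ₖ Matrix.diagonal (fun i => ((D i : ℝ) : ℂ))) (a, s1) (b, t1) * (c:ℂ)^2 := by
          simp only [Matrix.kroneckerMap_apply, hρ', Matrix.of_apply, Matrix.diagonal_apply]
          field_simp
  · rintro ⟨ρ', hρ'psd, hEq⟩
    subst hEq
    refine ⟨Matrix.of fun p q : κ × T × T => ρ' p.1 q.1 * ψD p.2 * ψD q.2, ?_, ?_, ?_⟩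
    · obtain ⟨C, hC⟩ : ∃ C : Matrix κ κ ℂ, ρ' = Cᴴ * C := by
        open scoped MatrixOrder in
        obtain ⟨C, hC⟩ := CStarAlgebra.nonneg_iff_eq_star_mul_self.mp hρ'psd.nonneg
        exact ⟨C, hC⟩
      have hfac : (Matrix.of fun p q : κ × T × T => ρ' p.1 q.1 * ψD p.2 * ψD q.2) =
          (Matrix.of fun (k : κ) (p : κ × T × T) => C k p.1 * ψD p.2)ᴴ *
          (Matrix.of fun (k : κ) (p : κ × T × T) => C k p.1 * ψD p.2) := by
        ext p q
        have hentry : ρ' p.1 q.1 = ∑ k, star (C k p.1) * C k q.1 := by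
          rw [hC]; simp [Matrix.mul_apply, Matrix.conjTranspose_apply]
        simp only [Matrix.of_apply, Matrix.mul_apply, Matrix.conjTranspose_apply,
          Matrix.of_apply, hentry, Finset.sum_mul, star_mul', hψreal]
        refine Finset.sum_congr rfl fun k _ => ?_
        ring
      rw [hfac]
      exact Matrix.posSemidef_conjTranspose_mul_self _
    · rintro x ⟨v, rfl⟩
      refine ⟨fun a => ∑ q : κ × T × T, ρ' a q.1 * ψD q.2 * v q, ?_⟩
      funext p
      simp only [Matrix.mulVecLin_apply, Matrix.mulVec, dotProduct, Matrix.of_apply,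
        Finset.sum_mul]
      refine Finset.sum_congr rfl fun q _ => ?_
      ring
    · ext ⟨a, s1⟩ ⟨b, t1⟩
      simp only [Matrix.of_apply, Matrix.kroneckerMap_apply, Matrix.diagonal_apply,
        mul_assoc, ← Finset.mul_sum]
      rw [hpsum]
end

section
/- Separability via ghost swap-invariance (one direction): let H, G be finite-dimensional Hilbert spaces with dim H = dim G identified by a unitary u, and K a further finite-dimensional space. Suppose ρ° is a positive operator on (K ⊗ H) ⊗ G that is a finite sum ∑_i |α_i ⊗ β_i⟩⟨α_i ⊗ β_i| with α_i ∈ K ⊗ H, β_i ∈ G, β_i ≠ 0, and suppose the range of ρ° is pointwise fixed by the unitary swapping H and G (via u, identity on K). Then Tr_G(ρ°) is a separable operator on K ⊗ H, i.e. a finite sum ∑_j σ_j ⊗ τ_j with σ_j positive on K and τ_j positive on H. -/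
open Matrix ComplexOrder Kronecker

/-- The outer product |φ⟩⟨φ|. -/
noncomputable def outerMat {n : Type*} (φ : n → ℂ) : Matrix n n ℂ :=
  Matrix.vecMulVec φ (star φ)

/-- The SWAP unitary on K ⊗ H ⊗ G, exchanging H and G via the unitary U. -/
noncomputable def swapMat {κ η : Type*} [DecidableEq κ] (U : Matrix η η ℂ) :
    Matrix (κ × η × η) (κ × η × η) ℂ :=
  Matrix.of fun r c =>
    (if r.1 = c.1 then (1 : ℂ) else 0) * U r.2.1 c.2.2 * star (U c.2.1 r.2.2)

lemma outerMat_posSemidef {n : Type*} [Fintype n] (φ : n → ℂ) : (outerMat φ).PosSemidef := by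
  refine Matrix.PosSemidef.of_dotProduct_mulVec_nonneg ?_ ?_
  · ext r c
    simp [outerMat, Matrix.vecMulVec_apply, Matrix.conjTranspose_apply, mul_comm]
  · intro x
    have h : star x ⬝ᵥ (outerMat φ).mulVec x = star (star φ ⬝ᵥ x) * (star φ ⬝ᵥ x) := by
      simp [outerMat, Matrix.mulVec, dotProduct, Matrix.vecMulVec_apply,
        Finset.mul_sum, Finset.sum_mul, map_sum]
      rw [Finset.sum_comm]
      apply Finset.sum_congr rfl; intro j _
      apply Finset.sum_congr rfl; intro k _
      ring
    rw [h]
    exact star_mul_self_nonneg _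

lemma conj_outer {m : Type*} [Fintype m] (A : Matrix m m ℂ) (φ : m → ℂ) :
    A * outerMat φ * Aᴴ = outerMat (A.mulVec φ) := by
  ext r c
  simp [outerMat, Matrix.mul_apply, Matrix.vecMulVec_apply, Matrix.mulVec,
    dotProduct, Matrix.conjTranspose_apply, Finset.sum_mul, Finset.mul_sum, map_sum]
  apply Finset.sum_congr rfl; intro j _
  apply Finset.sum_congr rfl; intro k _
  ring

theorem stmt13 {κ η : Type*} [Fintype κ] [DecidableEq κ] [Fintype η] [DecidableEq η]
    {I : Type*} [Fintype I]
    (U : Matrix η η ℂ) (hU : U ∈ Matrix.unitaryGroup η ℂ)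
    (α : I → (κ × η → ℂ)) (β : I → (η → ℂ)) (hβ : ∀ i, β i ≠ 0)
    (ρc : Matrix (κ × η × η) (κ × η × η) ℂ)
    (hρc : ρc = ∑ i : I, outerMat (fun p : κ × η × η => α i (p.1, p.2.1) * β i p.2.2))
    (hfix : ∀ x ∈ LinearMap.range ρc.mulVecLin, (swapMat (κ := κ) U).mulVec x = x) :
    ∃ (N : ℕ) (σ : Fin N → Matrix κ κ ℂ) (τ : Fin N → Matrix η η ℂ),
      (∀ j, (σ j).PosSemidef) ∧ (∀ j, (τ j).PosSemidef) ∧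
      (Matrix.of fun p q : κ × η => ∑ g : η, ρc (p.1, (p.2, g)) (q.1, (q.2, g)))
        = ∑ j, σ j ⊗ₖ τ j := by
  classical
  set v : I → (κ × η × η → ℂ) := fun i p => α i (p.1, p.2.1) * β i p.2.2 with hv
  have hρc' : ρc = ∑ i : I, outerMat (v i) := hρc
  set S := swapMat (κ := κ) U with hSdef
  -- Step 1 : S * ρc = ρc
  have hSρ : S * ρc = ρc := by
    ext r c
    have h := hfix (ρc.mulVec (Pi.single c 1)) ⟨Pi.single c 1, rfl⟩
    have h2 := congrFun h r
    rw [Matrix.mulVec_mulVec] at h2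
    simpa [Matrix.mulVec_single] using h2
  have hAρ : (S - 1) * ρc = 0 := by rw [sub_mul, one_mul, hSρ, sub_self]
  -- Step 2 : each v i is fixed by S
  have hsum0 : ∑ i : I, outerMat ((S - 1).mulVec (v i)) = 0 := by
    calc ∑ i : I, outerMat ((S - 1).mulVec (v i))
        = ∑ i : I, (S - 1) * outerMat (v i) * (S - 1)ᴴ := by
          exact Finset.sum_congr rfl fun i _ => (conj_outer _ _).symm
      _ = (S - 1) * ρc * (S - 1)ᴴ := by rw [hρc', Finset.mul_sum, Finset.sum_mul]
      _ = 0 := by rw [hAρ, Matrix.zero_mul]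
  have hfixv : ∀ i, S.mulVec (v i) = v i := by
    intro i
    have hz : (S - 1).mulVec (v i) = 0 := by
      funext r
      have h0 := congrFun (congrFun hsum0 r) r
      rw [Matrix.sum_apply] at h0
      have h1 : ∑ j : I, (Complex.normSq ((S - 1).mulVec (v j) r) : ℂ) = 0 := by
        simpa [outerMat, Matrix.vecMulVec_apply, Complex.mul_conj] using h0
      have h2 : ∑ j : I, Complex.normSq ((S - 1).mulVec (v j) r) = 0 := by
        exact_mod_cast h1
      have h3 := (Finset.sum_eq_zero_iff_of_nonneg
        (fun j _ => Complex.normSq_nonneg _)).mp h2 i (Finset.mem_univ i)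
      simpa using Complex.normSq_eq_zero.mp h3
    have h4 : S.mulVec (v i) - v i = 0 := by
      simpa [Matrix.sub_mulVec, Matrix.one_mulVec] using hz
    exact sub_eq_zero.mp h4
  -- Step 3 : componentwise product structure
  have hkey : ∀ i (k : κ) (a b : η),
      (U.mulVec (β i)) a * (∑ c1, (starRingEnd ℂ) (U c1 b) * α i (k, c1))
        = α i (k, a) * β i b := by
    intro i k a b
    have h := congrFun (hfixv i) (k, a, b)
    simp only [hSdef, swapMat, Matrix.mulVec, dotProduct, Matrix.of_apply,
      Fintype.sum_prod_type, hv, ite_mul, one_mul, zero_mul, Finset.sum_ite_irrel,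
      Finset.sum_const_zero, Finset.sum_ite_eq, Finset.mem_univ, if_true] at h
    rw [← h, Matrix.mulVec, dotProduct, Finset.sum_mul_sum, Finset.sum_comm]
    apply Finset.sum_congr rfl; intro x1 _
    apply Finset.sum_congr rfl; intro x2 _
    simp only [Complex.star_def]
    ring
  -- Step 4 : α i is a product
  have hb0 : ∀ i, ∃ b, β i b ≠ 0 := by
    intro i
    by_contra hcon
    push_neg at hcon
    exact hβ i (funext fun b => hcon b)
  choose b0 hb using hb0
  set c : I → κ → ℂ := fun i k =>
    (∑ c1, (starRingEnd ℂ) (U c1 (b0 i)) * α i (k, c1)) / β i (b0 i) with hc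
  have hα : ∀ i (k : κ) (a : η), α i (k, a) = c i k * (U.mulVec (β i)) a := by
    intro i k a
    have h := hkey i k a (b0 i)
    rw [hc]
    simp only []
    rw [div_mul_eq_mul_div, eq_div_iff (hb i), ← h]
    ring
  -- Step 5 : conclusion
  set t : I → ℝ := fun i => Real.sqrt (∑ g, Complex.normSq (β i g)) with ht
  set e := Fintype.equivFin I with he
  refine ⟨Fintype.card I, fun j => outerMat (c (e.symm j)),
    fun j => outerMat (fun a => (t (e.symm j) : ℂ) * (U.mulVec (β (e.symm j))) a),
    fun j => outerMat_posSemidef _, fun j => outerMat_posSemidef _, ?_⟩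
  ext ⟨k, a⟩ ⟨k', a'⟩
  rw [Matrix.sum_apply]
  rw [Equiv.sum_comp e.symm
    (fun i => (outerMat (c i) ⊗ₖ outerMat fun x => (t i : ℂ) * (U.mulVec (β i)) x) (k,a) (k',a'))]
  simp only [Matrix.of_apply, hρc', Matrix.sum_apply]
  rw [Finset.sum_comm]
  apply Finset.sum_congr rfl; intro i _
  simp only [outerMat, Matrix.kroneckerMap_apply, Matrix.vecMulVec_apply, Pi.star_apply,
    Complex.star_def, _root_.map_mul, hv, Complex.conj_ofReal, hα]
  have ht2 : (∑ x : η, β i x * (starRingEnd ℂ) (β i x)) = ((t i : ℂ)) * ((t i : ℂ)) := by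
    rw [← Complex.ofReal_mul, ht,
      Real.mul_self_sqrt (Finset.sum_nonneg fun g _ => Complex.normSq_nonneg _)]
    push_cast
    exact Finset.sum_congr rfl fun x _ => Complex.mul_conj _
  rw [Finset.sum_congr rfl (fun x _ =>
    show c i k * (U *ᵥ β i) a * β i x *
        ((starRingEnd ℂ) (c i k') * (starRingEnd ℂ) ((U *ᵥ β i) a') * (starRingEnd ℂ) (β i x))
      = (c i k * (starRingEnd ℂ) (c i k') * ((U *ᵥ β i) a * (starRingEnd ℂ) ((U *ᵥ β i) a')))
        * (β i x * (starRingEnd ℂ) (β i x)) from by ring),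
    ← Finset.mul_sum, ht2]
  ring
end

section
/- Classicality via ghost classical-equality (one direction): let T be a finite type, K a finite-dimensional Hilbert space, and CLASSEQ ⊆ K ⊗ ℓ²(T) ⊗ ℓ²(T) the span of {v ⊗ |i⟩ ⊗ |i⟩}. Suppose ρ° = ∑_j |α_j ⊗ β_j⟩⟨α_j ⊗ β_j| with α_j ∈ K ⊗ ℓ²(T), β_j ∈ ℓ²(T), β_j ≠ 0, and the range of ρ° is contained in CLASSEQ. Then ρ := Tr₃(ρ°) is classical in the second factor: ρ = ∑_{i ∈ T} ρ_i ⊗ |i⟩⟨i| for some positive operators ρ_i on K. -/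
open Matrix ComplexOrder Kronecker

lemma outerMat_apply {n : Type*} (φ : n → ℂ) (i j : n) :
    outerMat φ i j = φ i * (starRingEnd ℂ) (φ j) := rfl

theorem stmt14 {κ T : Type*} [Fintype κ] [DecidableEq κ] [Fintype T] [DecidableEq T]
    {I : Type*} [Fintype I]
    (CLASSEQ : Submodule ℂ (κ × T × T → ℂ))
    (hCLASSEQ : CLASSEQ = Submodule.span ℂ
      {f | ∃ (k : κ → ℂ) (i : T), f = fun p =>
        k p.1 * (if p.2.1 = i then 1 else 0) * (if p.2.2 = i then (1 : ℂ) else 0)})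
    (α : I → (κ × T → ℂ)) (β : I → (T → ℂ)) (hβ : ∀ j, β j ≠ 0)
    (ρc : Matrix (κ × T × T) (κ × T × T) ℂ)
    (hρc : ρc = ∑ j : I, outerMat (fun p : κ × T × T => α j (p.1, p.2.1) * β j p.2.2))
    (hrange : LinearMap.range ρc.mulVecLin ≤ CLASSEQ) :
    ∃ ρi : T → Matrix κ κ ℂ, (∀ i, (ρi i).PosSemidef) ∧
      (Matrix.of fun p q : κ × T => ∑ b : T, ρc (p.1, (p.2, b)) (q.1, (q.2, b)))
        = ∑ i : T, ρi i ⊗ₖ Matrix.single i i (1 : ℂ) := by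
  classical
  -- every element of CLASSEQ vanishes off the diagonal
  have hvan : ∀ f ∈ CLASSEQ, ∀ p : κ × T × T, p.2.1 ≠ p.2.2 → f p = 0 := by
    intro f hf p hp
    rw [hCLASSEQ] at hf
    have hle : Submodule.span ℂ
        {f : κ × T × T → ℂ | ∃ (k : κ → ℂ) (i : T), f = fun p =>
          k p.1 * (if p.2.1 = i then 1 else 0) * (if p.2.2 = i then (1 : ℂ) else 0)}
        ≤ LinearMap.ker (LinearMap.proj p : (κ × T × T → ℂ) →ₗ[ℂ] ℂ) := by
      rw [Submodule.span_le]
      rintro g ⟨k, i, rfl⟩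
      simp only [SetLike.mem_coe, LinearMap.mem_ker, LinearMap.proj_apply]
      by_cases h1 : p.2.1 = i
      · have h2 : p.2.2 ≠ i := by rw [← h1]; exact fun h => hp h.symm
        simp [h2]
      · simp [h1]
    exact hle hf
  -- off-diagonal rows of ρc vanish
  have hentry : ∀ p q : κ × T × T, p.2.1 ≠ p.2.2 → ρc p q = 0 := by
    intro p q hp
    have hm : ρc.mulVec (Pi.single q 1) ∈ CLASSEQ := hrange ⟨Pi.single q 1, rfl⟩
    have := hvan _ hm p hp
    simpa [Matrix.mulVec, dotProduct_single] using this
  -- the key vanishing property of the vectors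
  have hαβ : ∀ (j : I) (k : κ) (a b : T), a ≠ b → α j (k, a) * β j b = 0 := by
    intro j k a b hab
    have h0 : ρc (k, (a, b)) (k, (a, b)) = 0 := hentry _ _ hab
    rw [hρc, Matrix.sum_apply] at h0
    have h1 : ∀ j' : I, outerMat (fun p : κ × T × T => α j' (p.1, p.2.1) * β j' p.2.2)
        (k, (a, b)) (k, (a, b)) = ((Complex.normSq (α j' (k, a) * β j' b) : ℝ) : ℂ) := by
      intro j'
      rw [outerMat_apply, Complex.mul_conj]
    rw [Finset.sum_congr rfl fun j' _ => h1 j'] at h0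
    rw [← Complex.ofReal_sum] at h0
    have h2 : ∑ j' : I, Complex.normSq (α j' (k, a) * β j' b) = 0 := by
      exact_mod_cast h0
    have h3 := (Finset.sum_eq_zero_iff_of_nonneg
      (fun j' _ => Complex.normSq_nonneg _)).mp h2 j (Finset.mem_univ j)
    exact Complex.normSq_eq_zero.mp h3
  refine ⟨fun i => ∑ j : I, ∑ b : T, outerMat (fun k => β j b * α j (k, i)), ?_, ?_⟩
  · intro i
    refine Finset.sum_induction _ _ (fun A B hA hB => hA.add hB) Matrix.PosSemidef.zero
      fun j _ => ?_
    exact Finset.sum_induction _ _ (fun A B hA hB => hA.add hB) Matrix.PosSemidef.zero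
      fun b _ => outerMat_posSemidef _
  · ext ⟨p1, p2⟩ ⟨q1, q2⟩
    rw [hρc]
    simp only [Matrix.of_apply, Matrix.sum_apply, Matrix.kroneckerMap_apply,
      outerMat_apply, Matrix.single, Matrix.of_apply]
    by_cases hpq : p2 = q2
    · subst hpq
      have hrhs : ∑ i : T, (∑ j : I, ∑ b : T, (fun k => β j b * α j (k, i)) p1 *
            (starRingEnd ℂ) ((fun k => β j b * α j (k, i)) q1)) *
            (if i = p2 ∧ i = p2 then (1 : ℂ) else 0)
          = ∑ j : I, ∑ b : T, (β j b * α j (p1, p2)) *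
            (starRingEnd ℂ) (β j b * α j (q1, p2)) := by
        rw [Finset.sum_congr rfl (g := fun i => if i = p2 then
            ∑ j : I, ∑ b : T, (β j b * α j (p1, i)) *
              (starRingEnd ℂ) (β j b * α j (q1, i)) else 0)
          (fun i _ => by by_cases h : i = p2 <;> simp [h])]
        simp
      rw [hrhs, Finset.sum_comm]
      refine Finset.sum_congr rfl fun b _ => Finset.sum_congr rfl fun j _ => ?_
      simp only [_root_.map_mul]
      ring
    · have hrhs : ∑ i : T, (∑ j : I, ∑ b : T, (fun k => β j b * α j (k, i)) p1 *
            (starRingEnd ℂ) ((fun k => β j b * α j (k, i)) q1)) *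
            (if i = p2 ∧ i = q2 then (1 : ℂ) else 0) = 0 := by
        refine Finset.sum_eq_zero fun i _ => ?_
        have : ¬(i = p2 ∧ i = q2) := by rintro ⟨rfl, rfl⟩; exact hpq rfl
        simp [this]
      rw [hrhs]
      refine Finset.sum_eq_zero fun b _ => Finset.sum_eq_zero fun j _ => ?_
      by_cases hb : b = p2
      · have : α j (q1, q2) * β j b = 0 := hαβ j q1 q2 b (by rw [hb]; exact fun h => hpq h.symm)
        rw [this]
        simp
      · have : α j (p1, p2) * β j b = 0 := hαβ j p1 p2 b (fun h => hb h.symm)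
        rw [this]
        simp
end
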